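/- Let μ̂, π̂, ω̂, δ̂ be arbitrary measurable functions of X with δ̂, ω̂ bounded away from 0. Then the bias of the one-step corrected functional satisfies E[ μ̂π̂ + (1(R=1,Z=1,A=1)/(ω̂δ̂))(Y_t − μ̂) + (1(Z=1)/δ̂)·μ̂·(A − π̂) ] − E[μ π] = E[ ((ωδ − ω̂δ̂)/(ω̂δ̂))·π·(μ − μ̂) ] + E[ ((δ − δ̂)/δ̂)·μ̂·(π − π̂) ], where μ = μ_{t,1,1}, π = π_1, ω = ω_{1,1}, δ = δ_1 are the true nuisance functions. -/

import Mathlib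

open Finset
open scoped Classical

noncomputable def Pr {Ω : Type*} [Fintype Ω] (p : Ω → ℝ) (A : Ω → Prop) : ℝ :=
  ∑ ω, if A ω then p ω else 0

noncomputable def Ex {Ω : Type*} [Fintype Ω] (p : Ω → ℝ) (f : Ω → ℝ) : ℝ :=
  ∑ ω, p ω * f ω

noncomputable def cexp {Ω : Type*} [Fintype Ω] (p : Ω → ℝ) (f : Ω → ℝ) (A : Ω → Prop) : ℝ :=
  (∑ ω, if A ω then p ω * f ω else 0) / Pr p A

/-!
Split every expectation over the fibers `{X = x}`. On a fiber, the partial masses factor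
through the true nuisances, `Pr (X = x, Z = 1) = δ · Pr (X = x)` and (as `A` and `R` are
binary) `Pr (X = x, R = Z = A = 1) = ω π δ · Pr (X = x)`, so the one-step estimator contributes
`μ̂ π̂ + ωδ/(ω̂δ̂) · π (μ - μ̂) + δ/δ̂ · μ̂ (π - π̂)` per unit of mass and the identity becomes a
polynomial identity in the nuisance values. On null fibers, where the conditional expectations
take the junk value `0`, the factorizations still hold because `p ≥ 0` makes every partial
mass there vanish.
-/

section Expectation

variable {Ω : Type*} [Fintype Ω] (p : Ω → ℝ)

theorem Ex_add (f g : Ω → ℝ) : Ex p (fun ω => f ω + g ω) = Ex p f + Ex p g := by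
  simp only [Ex, mul_add, sum_add_distrib]

theorem Ex_sub (f g : Ω → ℝ) : Ex p (fun ω => f ω - g ω) = Ex p f - Ex p g := by
  simp only [Ex, mul_sub, sum_sub_distrib]

theorem Ex_const_mul (c : ℝ) (f : Ω → ℝ) : Ex p (fun ω => c * f ω) = c * Ex p f := by
  simp only [Ex, mul_sum]
  exact sum_congr rfl fun ω _ => by ring

theorem Ex_ite_eq_sum (B : Ω → Prop) (f : Ω → ℝ) :
    Ex p (fun ω => if B ω then f ω else 0) = ∑ ω, if B ω then p ω * f ω else 0 := by
  simp only [Ex, mul_ite, mul_zero]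

theorem Ex_ite_const (B : Ω → Prop) (c : ℝ) :
    Ex p (fun ω => if B ω then c else 0) = c * Pr p B := by
  simp only [Ex, Pr, mul_sum, mul_ite, mul_zero]
  exact sum_congr rfl fun ω _ => by rw [mul_comm]

theorem Pr_congr {A B : Ω → Prop} (h : ∀ ω, A ω ↔ B ω) : Pr p A = Pr p B := by
  rw [show A = B from funext fun ω => propext (h ω)]

theorem Pr_and_eq_one (B : Ω → Prop) {V : Ω → ℝ} (hV : ∀ ω, V ω = 0 ∨ V ω = 1) :
    Pr p (fun ω => B ω ∧ V ω = 1) = Ex p (fun ω => if B ω then V ω else 0) := by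
  simp only [Pr, Ex]
  refine sum_congr rfl fun ω _ => ?_
  rcases hV ω with h | h <;> by_cases hB : B ω <;> simp [h, hB]

variable {p} (hp : ∀ ω, 0 ≤ p ω)
include hp

theorem eq_zero_of_Pr_eq_zero {A : Ω → Prop} (h : Pr p A = 0) {ω : Ω} (hω : A ω) :
    p ω = 0 := by
  have := (sum_eq_zero_iff_of_nonneg fun ω _ => ?_).mp h ω (mem_univ ω)
  · simpa [hω] using this
  · split_ifs <;> simp [hp ω]

theorem Pr_div_mul_Pr_of_imp {A B : Ω → Prop} (hBA : ∀ ω, B ω → A ω) :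
    Pr p B / Pr p A * Pr p A = Pr p B := by
  by_cases hA : Pr p A = 0
  · rw [hA, mul_zero, eq_comm]
    refine sum_eq_zero fun ω _ => ?_
    split_ifs with hB
    · exact eq_zero_of_Pr_eq_zero hp hA (hBA ω hB)
    · rfl
  · exact div_mul_cancel₀ _ hA

theorem cexp_mul_Pr (f : Ω → ℝ) (B : Ω → Prop) :
    cexp p f B * Pr p B = Ex p (fun ω => if B ω then f ω else 0) := by
  rw [cexp, Ex_ite_eq_sum]
  by_cases hB : Pr p B = 0
  · rw [hB, mul_zero, eq_comm]
    refine sum_eq_zero fun ω _ => ?_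
    split_ifs with hω
    · rw [eq_zero_of_Pr_eq_zero hp hB hω, zero_mul]
    · rfl
  · exact div_mul_cancel₀ _ hB

theorem Ex_ite_sub_const (f : Ω → ℝ) (B : Ω → Prop) (c : ℝ) :
    Ex p (fun ω => if B ω then f ω - c else 0) = (cexp p f B - c) * Pr p B := by
  have split : (fun ω => if B ω then f ω - c else 0)
      = fun ω => (if B ω then f ω else 0) - c * (if B ω then 1 else 0) := by
    funext ω; split_ifs <;> ring
  rw [split, Ex_sub, Ex_const_mul, Ex_ite_const, ← cexp_mul_Pr hp]
  ring

end Expectation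

section Fibers

variable {Ω 𝕏 : Type*} [Fintype Ω] [Fintype 𝕏] (X : Ω → 𝕏)

theorem Ex_eq_sum_fiber (p : Ω → ℝ) (F : 𝕏 → Ω → ℝ) :
    Ex p (fun ω => F (X ω) ω) = ∑ x, Ex p (fun ω => if X ω = x then F x ω else 0) := by
  simp only [Ex]
  rw [sum_comm]
  refine sum_congr rfl fun ω _ => ?_
  simp [mul_ite]

theorem Ex_comp (p : Ω → ℝ) (g : 𝕏 → ℝ) :
    Ex p (fun ω => g (X ω)) = ∑ x, g x * Pr p (fun ω => X ω = x) := by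
  rw [Ex_eq_sum_fiber X p fun x _ => g x]
  exact sum_congr rfl fun x _ => Ex_ite_const p _ _

theorem Ex_indicator_mul_residual {p : Ω → ℝ} (hp : ∀ ω, 0 ≤ p ω) (B : Ω → Prop)
    [DecidablePred B] (w g : 𝕏 → ℝ) (f : Ω → ℝ) :
    Ex p (fun ω => (if B ω then 1 else 0) * w (X ω) * (f ω - g (X ω)))
      = ∑ x, w x * (cexp p f (fun ω => X ω = x ∧ B ω) - g x)
          * Pr p (fun ω => X ω = x ∧ B ω) := by
  rw [Ex_eq_sum_fiber X p fun x ω => (if B ω then 1 else 0) * w x * (f ω - g x)]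
  refine sum_congr rfl fun x _ => ?_
  have fiber : (fun ω => if X ω = x then (if B ω then 1 else 0) * w x * (f ω - g x) else 0)
      = fun ω => w x * (if X ω = x ∧ B ω then f ω - g x else 0) := by
    funext ω; by_cases hX : X ω = x <;> by_cases hB : B ω <;> simp [hX, hB]
  rw [fiber, Ex_const_mul, mul_assoc]
  congr 1
  convert Ex_ite_sub_const hp f (fun ω => X ω = x ∧ B ω) (g x)

end Fibers

theorem doubly_robust_bias_decomposition_general {Ω 𝕏 : Type*} [Fintype Ω] [Fintype 𝕏]
    (p : Ω → ℝ) (hp0 : ∀ ω, 0 ≤ p ω)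
    (X : Ω → 𝕏) (Z A R Y : Ω → ℝ)
    (hAbin : ∀ ω, A ω = 0 ∨ A ω = 1)
    (hRbin : ∀ ω, R ω = 0 ∨ R ω = 1)
    -- estimated nuisance functions, with δ̂, ω̂ bounded away from 0
    (μh πh ωh δh : 𝕏 → ℝ) (hδh : ∀ x, 0 < δh x) (hωh : ∀ x, 0 < ωh x) :
    -- true nuisance functions μ = μ_{t,1,1}, π = π_1, ω = ω_{1,1}, δ = δ_1
    let δ : 𝕏 → ℝ := fun x =>
      Pr p (fun ω => Z ω = 1 ∧ X ω = x) / Pr p (fun ω => X ω = x)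
    let π : 𝕏 → ℝ := fun x => cexp p A (fun ω => X ω = x ∧ Z ω = 1)
    let ωc : 𝕏 → ℝ := fun x => cexp p R (fun ω => X ω = x ∧ Z ω = 1 ∧ A ω = 1)
    let μ : 𝕏 → ℝ := fun x => cexp p Y (fun ω => X ω = x ∧ R ω = 1 ∧ Z ω = 1 ∧ A ω = 1)
    Ex p (fun ω =>
        μh (X ω) * πh (X ω)
        + (if R ω = 1 ∧ Z ω = 1 ∧ A ω = 1 then 1 else 0) / (ωh (X ω) * δh (X ω)) *
            (Y ω - μh (X ω))
        + (if Z ω = 1 then 1 else 0) / δh (X ω) * μh (X ω) * (A ω - πh (X ω)))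
      - Ex p (fun ω => μ (X ω) * π (X ω))
    = Ex p (fun ω =>
        (ωc (X ω) * δ (X ω) - ωh (X ω) * δh (X ω)) / (ωh (X ω) * δh (X ω)) *
          π (X ω) * (μ (X ω) - μh (X ω)))
      + Ex p (fun ω =>
          (δ (X ω) - δh (X ω)) / δh (X ω) * μh (X ω) * (π (X ω) - πh (X ω))) := by
  intro δ π ωc μ
  have massZ (x : 𝕏) : Pr p (fun ω => X ω = x ∧ Z ω = 1) = δ x * Pr p (fun ω => X ω = x) := by
    rw [Pr_div_mul_Pr_of_imp hp0 fun ω h => h.2, Pr_congr p fun ω => and_comm]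
  have massZA (x : 𝕏) : Pr p (fun ω => X ω = x ∧ Z ω = 1 ∧ A ω = 1)
      = π x * δ x * Pr p (fun ω => X ω = x) := by
    rw [mul_assoc, ← massZ, cexp_mul_Pr hp0, ← Pr_and_eq_one p _ hAbin]
    exact Pr_congr p fun ω => and_assoc.symm
  have massRZA (x : 𝕏) : Pr p (fun ω => X ω = x ∧ R ω = 1 ∧ Z ω = 1 ∧ A ω = 1)
      = ωc x * π x * δ x * Pr p (fun ω => X ω = x) := by
    rw [mul_assoc, mul_assoc, ← mul_assoc (π x), ← massZA, cexp_mul_Pr hp0,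
      ← Pr_and_eq_one p _ hRbin]
    exact Pr_congr p fun ω => by tauto
  have residualY : Ex p (fun ω => (if R ω = 1 ∧ Z ω = 1 ∧ A ω = 1 then 1 else 0)
        / (ωh (X ω) * δh (X ω)) * (Y ω - μh (X ω)))
      = ∑ x, (ωh x * δh x)⁻¹ * (μ x - μh x) * (ωc x * π x * δ x * Pr p (fun ω => X ω = x)) := by
    conv_lhs => simp only [div_eq_mul_inv]
    rw [Ex_indicator_mul_residual X hp0 _ (fun x => (ωh x * δh x)⁻¹)]
    simp only [massRZA]
    rfl
  have residualA : Ex p (fun ω => (if Z ω = 1 then 1 else 0) / δh (X ω) * μh (X ω)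
        * (A ω - πh (X ω)))
      = ∑ x, μh x / δh x * (π x - πh x) * (δ x * Pr p (fun ω => X ω = x)) := by
    conv_lhs => simp only [mul_comm_div]
    rw [Ex_indicator_mul_residual X hp0 _ (fun x => μh x / δh x)]
    simp only [massZ]
    rfl
  rw [Ex_add, Ex_add, residualY, residualA, Ex_comp X p (fun x => μh x * πh x),
    Ex_comp X p (fun x => μ x * π x),
    Ex_comp X p (fun x => (ωc x * δ x - ωh x * δh x) / (ωh x * δh x) * π x * (μ x - μh x)),
    Ex_comp X p (fun x => (δ x - δh x) / δh x * μh x * (π x - πh x)),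
    ← sum_add_distrib, ← sum_add_distrib, ← sum_sub_distrib, ← sum_add_distrib]
  refine sum_congr rfl fun x _ => ?_
  have hωx := (hωh x).ne'
  have hδx := (hδh x).ne'
  field_simp
  ring

/-- doubly robust bias decomposition of the one-step corrected functional. -/
theorem doubly_robust_bias_decomposition {Ω 𝕏 : Type*} [Fintype Ω] [Fintype 𝕏]
    (p : Ω → ℝ) (hp0 : ∀ ω, 0 ≤ p ω) (hp1 : ∑ ω, p ω = 1)
    (X : Ω → 𝕏) (Z A R Y : Ω → ℝ)
    (hZbin : ∀ ω, Z ω = 0 ∨ Z ω = 1) (hAbin : ∀ ω, A ω = 0 ∨ A ω = 1)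
    (hRbin : ∀ ω, R ω = 0 ∨ R ω = 1) (hYbin : ∀ ω, Y ω = 0 ∨ Y ω = 1)
    -- estimated nuisance functions, with δ̂, ω̂ bounded away from 0
    (μh πh ωh δh : 𝕏 → ℝ) (hδh : ∀ x, 0 < δh x) (hωh : ∀ x, 0 < ωh x)
    -- R ⟂ Y_t | (X, Z, A)
    (hCI : ∀ x : 𝕏,
      Pr p (fun ω => R ω = 1 ∧ Y ω = 1 ∧ X ω = x ∧ Z ω = 1 ∧ A ω = 1) *
          Pr p (fun ω => X ω = x ∧ Z ω = 1 ∧ A ω = 1)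
        = Pr p (fun ω => R ω = 1 ∧ X ω = x ∧ Z ω = 1 ∧ A ω = 1) *
            Pr p (fun ω => Y ω = 1 ∧ X ω = x ∧ Z ω = 1 ∧ A ω = 1))
    -- positivity of the true nuisances where required
    (hpos : ∀ x : 𝕏, Pr p (fun ω => X ω = x) > 0 →
      Pr p (fun ω => Z ω = 1 ∧ X ω = x) > 0 ∧
      Pr p (fun ω => X ω = x ∧ Z ω = 1 ∧ A ω = 1) > 0 ∧
      Pr p (fun ω => X ω = x ∧ Z ω = 1 ∧ A ω = 1 ∧ R ω = 1) > 0) :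
    -- true nuisance functions μ = μ_{t,1,1}, π = π_1, ω = ω_{1,1}, δ = δ_1
    let δ : 𝕏 → ℝ := fun x =>
      Pr p (fun ω => Z ω = 1 ∧ X ω = x) / Pr p (fun ω => X ω = x)
    let π : 𝕏 → ℝ := fun x => cexp p A (fun ω => X ω = x ∧ Z ω = 1)
    let ωc : 𝕏 → ℝ := fun x => cexp p R (fun ω => X ω = x ∧ Z ω = 1 ∧ A ω = 1)
    let μ : 𝕏 → ℝ := fun x => cexp p Y (fun ω => X ω = x ∧ R ω = 1 ∧ Z ω = 1 ∧ A ω = 1)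
    Ex p (fun ω =>
        μh (X ω) * πh (X ω)
        + (if R ω = 1 ∧ Z ω = 1 ∧ A ω = 1 then 1 else 0) / (ωh (X ω) * δh (X ω)) *
            (Y ω - μh (X ω))
        + (if Z ω = 1 then 1 else 0) / δh (X ω) * μh (X ω) * (A ω - πh (X ω)))
      - Ex p (fun ω => μ (X ω) * π (X ω))
    = Ex p (fun ω =>
        (ωc (X ω) * δ (X ω) - ωh (X ω) * δh (X ω)) / (ωh (X ω) * δh (X ω)) *
          π (X ω) * (μ (X ω) - μh (X ω)))
      + Ex p (fun ω =>
          (δ (X ω) - δh (X ω)) / δh (X ω) * μh (X ω) * (π (X ω) - πh (X ω))) :=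
  doubly_robust_bias_decomposition_general p hp0 X Z A R Y hAbin hRbin μh πh ωh δh hδh hωh
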